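/- Let G be an Eulerian simple graph on n ≥ 4 vertices in which the distance between any two triangles is at least 3, and suppose G contains at least one triangle. Let T1, ..., Tk be the triangles of G and, for each i, let v_i be a vertex of T_i of maximum degree in G. Then {v_1, ..., v_k} is a triangle removal set of G; that is, G − {v_1, ..., v_k} is triangle-free, each d_G(v_i) ≥ 4, every vertex of V(G) \ {v_1, ..., v_k} has even degree in G, and (N_G(v_i) ∪ {v_i}) ∩ (N_G(v_j) ∪ {v_j}) = ∅ for all distinct i, j. -/

import Mathlib

/-!
A vertex `v T` of maximum degree in a triangle `T` has degree at least `4`: since `G` is connected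
and has a vertex outside `T`, some vertex of `T` has a neighbour outside `T`, hence degree at
least `3`, hence at least `4` by evenness. Two chosen vertices of distinct triangles are at
distance at least `3`, so their closed neighbourhoods cannot share a vertex, which would give a
walk of length at most `2` between them.
-/

open SimpleGraph

namespace SimpleGraph

variable {V : Type*} {G : SimpleGraph V}

lemma Preconnected.exists_adj_mem_notMem (hG : G.Preconnected) {S : Set V} {u w : V}
    (hu : u ∈ S) (hw : w ∉ S) : ∃ a ∈ S, ∃ b ∉ S, G.Adj a b := by
  obtain ⟨d, -, hd₁, hd₂⟩ := (hG u w).some.exists_boundary_dart S hu hw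
  exact ⟨d.fst, hd₁, d.snd, hd₂, d.adj⟩

lemma IsNClique.le_degree_of_adj_notMem [Fintype V] [DecidableRel G.Adj] {n : ℕ} {T : Finset V}
    (hT : G.IsNClique n T) {a b : V} (ha : a ∈ T) (hb : b ∉ T) (hab : G.Adj a b) :
    n ≤ G.degree a := by
  classical
  have hsub : insert b (T.erase a) ⊆ G.neighborFinset a := by
    intro x hx
    rw [mem_neighborFinset]
    rcases Finset.mem_insert.1 hx with rfl | hx
    · exact hab
    · exact hT.1 ha (Finset.mem_of_mem_erase hx) (Finset.ne_of_mem_erase hx).symm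
  have hcard : (insert b (T.erase a)).card = n := by
    rw [Finset.card_insert_of_notMem (fun h => hb (Finset.mem_of_mem_erase h)),
      Finset.card_erase_of_mem ha, hT.2]
    have : 0 < n := hT.2 ▸ Finset.card_pos.2 ⟨a, ha⟩
    omega
  rw [← card_neighborFinset_eq_degree, ← hcard]
  exact Finset.card_le_card hsub

lemma Connected.exists_le_degree_of_isNClique [Fintype V] [DecidableRel G.Adj] {n : ℕ}
    {T : Finset V} (hG : G.Connected) (hT : G.IsNClique n T) (hn₀ : 0 < n)
    (hn : n < Fintype.card V) : ∃ a ∈ T, n ≤ G.degree a := by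
  obtain ⟨u, hu⟩ : T.Nonempty := Finset.card_pos.1 (hT.2 ▸ hn₀)
  obtain ⟨w, hw⟩ : ∃ w, w ∉ T := by
    by_contra! h
    have := Finset.card_le_card (fun x _ => h x : Finset.univ ⊆ T)
    rw [Finset.card_univ, hT.2] at this
    omega
  obtain ⟨a, ha, b, hb, hab⟩ :=
    hG.preconnected.exists_adj_mem_notMem (S := (T : Set V)) (Finset.mem_coe.2 hu)
      (mt Finset.mem_coe.1 hw)
  exact ⟨a, ha, hT.le_degree_of_adj_notMem ha hb hab⟩

lemma exists_walk_length_le_one_of_mem_insert_neighborSet {u z : V}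
    (h : z ∈ insert u (G.neighborSet u)) : ∃ p : G.Walk u z, p.length ≤ 1 := by
  rcases h with rfl | h
  · exact ⟨.nil, by simp⟩
  · exact ⟨(mem_neighborSet G u z).1 h |>.toWalk, by simp⟩

lemma disjoint_insert_neighborSet_of_three_le_dist {u w : V} (h : 3 ≤ G.dist u w) :
    Disjoint (insert u (G.neighborSet u)) (insert w (G.neighborSet w)) := by
  rw [Set.disjoint_left]
  intro z hu hw
  obtain ⟨p, hp⟩ := exists_walk_length_le_one_of_mem_insert_neighborSet hu
  obtain ⟨q, hq⟩ := exists_walk_length_le_one_of_mem_insert_neighborSet hw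
  have := dist_le (p.append q.reverse)
  rw [Walk.length_append, Walk.length_reverse] at this
  omega

end SimpleGraph

theorem stmt10_general {V : Type*} [Fintype V]
    (G : SimpleGraph V) [DecidableRel G.Adj]
    (hn : 4 ≤ Fintype.card V)
    (hconn : G.Connected) (heven : ∀ w, Even (G.degree w))
    (htri : ∀ T₁ T₂ : Finset V, G.IsNClique 3 T₁ → G.IsNClique 3 T₂ → T₁ ≠ T₂ →
      ∀ u ∈ T₁, ∀ w ∈ T₂, 3 ≤ G.dist u w)
    (v : Finset V → V)
    (hv : ∀ T : Finset V, G.IsNClique 3 T →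
      v T ∈ T ∧ ∀ u ∈ T, G.degree u ≤ G.degree (v T)) :
    (∀ T : Finset V, G.IsNClique 3 T →
        ∃ y ∈ T, y ∈ {z : V | ∃ T' : Finset V, G.IsNClique 3 T' ∧ v T' = z}) ∧
    (∀ y ∈ {z : V | ∃ T' : Finset V, G.IsNClique 3 T' ∧ v T' = z}, 4 ≤ G.degree y) ∧
    (∀ y ∉ {z : V | ∃ T' : Finset V, G.IsNClique 3 T' ∧ v T' = z}, Even (G.degree y)) ∧
    (∀ y ∈ {z : V | ∃ T' : Finset V, G.IsNClique 3 T' ∧ v T' = z},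
      ∀ y' ∈ {z : V | ∃ T' : Finset V, G.IsNClique 3 T' ∧ v T' = z}, y ≠ y' →
        Disjoint (insert y (G.neighborSet y)) (insert y' (G.neighborSet y'))) := by
  refine ⟨fun T hT => ⟨v T, (hv T hT).1, T, hT, rfl⟩, ?_, fun y _ => heven y, ?_⟩
  · rintro _ ⟨T, hT, rfl⟩
    obtain ⟨a, haT, ha⟩ := hconn.exists_le_degree_of_isNClique hT (by norm_num) (by omega)
    have h4 : 4 ≤ G.degree a := by
      obtain ⟨r, hr⟩ := heven a
      omega
    exact h4.trans ((hv T hT).2 a haT)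
  · rintro _ ⟨T₁, hT₁, rfl⟩ _ ⟨T₂, hT₂, rfl⟩ hne
    exact disjoint_insert_neighborSet_of_three_le_dist <|
      htri T₁ T₂ hT₁ hT₂ (by rintro rfl; exact hne rfl) _ (hv T₁ hT₁).1 _ (hv T₂ hT₂).1

/-- Let `G` be an Eulerian graph on `n ≥ 4` vertices in which the distance between any two
distinct triangles is at least `3`, containing at least one triangle. For each triangle `T`
of `G`, let `v T` be a vertex of `T` of maximum degree in `G`. Then the set
`R = {v T : T a triangle of G}` is a triangle removal set of `G`: `G - R` is triangle-free
(every triangle of `G` meets `R`), every vertex of `R` has degree at least `4`, every vertex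
outside `R` has even degree, and distinct vertices of `R` have disjoint closed
neighbourhoods. -/
theorem stmt10 {V : Type*} [Fintype V] [DecidableEq V]
    (G : SimpleGraph V) [DecidableRel G.Adj]
    (hn : 4 ≤ Fintype.card V)
    (hconn : G.Connected) (heven : ∀ w, Even (G.degree w))
    (htri : ∀ T₁ T₂ : Finset V, G.IsNClique 3 T₁ → G.IsNClique 3 T₂ → T₁ ≠ T₂ →
      ∀ u ∈ T₁, ∀ w ∈ T₂, 3 ≤ G.dist u w)
    (hex : ∃ T : Finset V, G.IsNClique 3 T)
    (v : Finset V → V)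
    (hv : ∀ T : Finset V, G.IsNClique 3 T →
      v T ∈ T ∧ ∀ u ∈ T, G.degree u ≤ G.degree (v T)) :
    (∀ T : Finset V, G.IsNClique 3 T →
        ∃ y ∈ T, y ∈ {z : V | ∃ T' : Finset V, G.IsNClique 3 T' ∧ v T' = z}) ∧
    (∀ y ∈ {z : V | ∃ T' : Finset V, G.IsNClique 3 T' ∧ v T' = z}, 4 ≤ G.degree y) ∧
    (∀ y ∉ {z : V | ∃ T' : Finset V, G.IsNClique 3 T' ∧ v T' = z}, Even (G.degree y)) ∧
    (∀ y ∈ {z : V | ∃ T' : Finset V, G.IsNClique 3 T' ∧ v T' = z},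
      ∀ y' ∈ {z : V | ∃ T' : Finset V, G.IsNClique 3 T' ∧ v T' = z}, y ≠ y' →
        Disjoint (insert y (G.neighborSet y)) (insert y' (G.neighborSet y'))) :=
  stmt10_general G hn hconn heven htri v hv
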